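/- arXiv:2105.05761 — 3 statements merged into one kernel-verified Lean document; each statement's English description precedes it below -/
import Mathlib

section
/- Let (X, d) be a pseudometric space, H a real inner product space with norm ‖·‖, P a nonempty finite subset of X, q ∈ X, and f : X → H. Let D, w, λ, β, c > 0 and 0 ≤ p ≤ 1 be real numbers. Assume: (i) ‖f(x) − f(y)‖ ≤ D·d(x, y) for all x, y ∈ X; (ii) Σ_{x,y ∈ P} ‖f(x) − f(y)‖² ≥ Σ_{x,y ∈ P} d(x, y)² (sums over ordered pairs); (iii) for every x ∈ P, the number of points y ∈ P with d(x, y) ≤ λ·D is at most p·|P|; (iv) d(x, y) ≤ β·c for all x, y ∈ P; (v) (1 − p)·λ² ≥ 16·w²; and (vi) β·c ≥ λ. Then the number of points x ∈ P with ‖f(x) − f(q)‖ ≤ w·D is at most (1 − (1 − p)·λ²/(4·β²·c²))·|P|. -/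
/-!
By (iii), every `x ∈ P` has at least `(1 - p)|P|` points of `P` farther than `λD`, so
`∑ d(x, y)² ≥ (1 - p) λ² D² |P|²`, and by (ii) the same lower bound holds for the images.
On the other hand, if `S` is the set of points mapped within `wD` of `f(q)`, a pair in `S × S`
contributes at most `(2wD)²` and any other pair at most `(Dβc)²` (Lipschitz bound and diameter).
With `A = (1 - p)λ²` and `B = (βc)²` this gives `(4B - A)|S|² ≤ 4(B - A)|P|²`, and
`|S| ≤ (1 - A/(4B))|P|` follows from the Bernoulli-type inequality `(1 - t/4)³ ≥ 1 - t`.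
-/

open Finset

theorem one_sub_mul_card_mul_sq_le_sum_sq {α : Type*} (s : Finset α) (g : α → ℝ) {p r : ℝ}
    (hr : 0 ≤ r) (h : (#(s.filter (g · ≤ r)) : ℝ) ≤ p * #s) :
    (1 - p) * #s * r ^ 2 ≤ ∑ y ∈ s, g y ^ 2 := by
  set far := s.filter fun y => ¬ g y ≤ r
  have hcard : (1 - p) * #s ≤ #far := by
    have := card_filter_add_card_filter_not (s := s) (g · ≤ r)
    have : ((#(s.filter (g · ≤ r)) : ℕ) : ℝ) + #far = #s := by exact_mod_cast this
    linarith
  calc (1 - p) * #s * r ^ 2 ≤ #far * r ^ 2 := by gcongr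
    _ = #far • r ^ 2 := (nsmul_eq_mul _ _).symm
    _ ≤ ∑ y ∈ far, g y ^ 2 := card_nsmul_le_sum _ _ _ fun y hy => by
        have hry : r < g y := not_le.mp (mem_filter.mp hy).2
        gcongr
    _ ≤ ∑ y ∈ s, g y ^ 2 :=
        sum_le_sum_of_subset_of_nonneg (filter_subset _ _) fun _ _ _ => sq_nonneg _

theorem one_sub_mul_card_sq_mul_sq_le_sum_sum_dist_sq {X : Type*} [PseudoMetricSpace X]
    (P : Finset X) {p r : ℝ} (hr : 0 ≤ r)
    (h : ∀ x ∈ P, (#(P.filter fun y => dist x y ≤ r) : ℝ) ≤ p * #P) :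
    (1 - p) * #P ^ 2 * r ^ 2 ≤ ∑ x ∈ P, ∑ y ∈ P, dist x y ^ 2 :=
  calc (1 - p) * #P ^ 2 * r ^ 2 = #P • ((1 - p) * #P * r ^ 2) := by
        rw [nsmul_eq_mul]; ring
    _ ≤ ∑ x ∈ P, ∑ y ∈ P, dist x y ^ 2 := card_nsmul_le_sum _ _ _ fun x hx =>
        one_sub_mul_card_mul_sq_le_sum_sq P (dist x) hr (h x hx)

theorem sum_sum_le_of_subset {α : Type*} {s t : Finset α} (g : α → α → ℝ) {a b : ℝ}
    (hts : t ⊆ s) (ha : ∀ x ∈ t, ∀ y ∈ t, g x y ≤ a) (hb : ∀ x ∈ s, ∀ y ∈ s, g x y ≤ b) :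
    ∑ x ∈ s, ∑ y ∈ s, g x y ≤ #s ^ 2 * b - #t ^ 2 * (b - a) := by
  have hsub : ∑ x ∈ t, ∑ y ∈ t, (b - g x y) ≤ ∑ x ∈ s, ∑ y ∈ s, (b - g x y) := by
    refine (sum_le_sum fun x hx => sum_le_sum_of_subset_of_nonneg hts fun y hy _ =>
      sub_nonneg.2 (hb x (hts hx) y hy)).trans
      (sum_le_sum_of_subset_of_nonneg hts fun x hx _ => sum_nonneg fun y hy => ?_)
    exact sub_nonneg.2 (hb x hx y hy)
  have hlow : #t ^ 2 * (b - a) ≤ ∑ x ∈ t, ∑ y ∈ t, (b - g x y) := by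
    have := sum_le_sum fun x hx => sum_le_sum fun y hy => sub_le_sub_left (ha x hx y hy) b
    simpa only [sum_const, nsmul_eq_mul, sq, mul_assoc] using this
  have hexpand : ∑ x ∈ s, ∑ y ∈ s, (b - g x y) = #s ^ 2 * b - ∑ x ∈ s, ∑ y ∈ s, g x y := by
    simp only [sum_sub_distrib, sum_const, nsmul_eq_mul]; ring
  linarith

theorem le_one_sub_div_mul_of_mul_sq_le {A B m n : ℝ} (hA : 0 ≤ A) (hAB : A ≤ B) (hB : 0 < B)
    (hm : 0 ≤ m) (hn : 0 ≤ n) (h : (4 * B - A) * m ^ 2 ≤ 4 * (B - A) * n ^ 2) :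
    m ≤ (1 - A / (4 * B)) * n := by
  have hC : 0 < 4 * B - A := by linarith
  -- `(4B - A)³ - 64B²(B - A) = A(16B² + 12AB - A²)`
  have hcube : 64 * B ^ 2 * (B - A) ≤ (4 * B - A) ^ 3 := by
    nlinarith [mul_nonneg hA (mul_nonneg hA (sub_nonneg.2 hAB)),
      mul_nonneg hA (mul_nonneg hB.le hB.le), mul_nonneg hA (mul_nonneg hA hB.le)]
  have hsq : (4 * B * m) ^ 2 ≤ ((4 * B - A) * n) ^ 2 := by
    refine le_of_mul_le_mul_left ?_ hC
    calc (4 * B - A) * (4 * B * m) ^ 2 = 16 * B ^ 2 * ((4 * B - A) * m ^ 2) := by ring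
      _ ≤ 16 * B ^ 2 * (4 * (B - A) * n ^ 2) := by gcongr
      _ = 64 * B ^ 2 * (B - A) * n ^ 2 := by ring
      _ ≤ (4 * B - A) ^ 3 * n ^ 2 := by gcongr
      _ = (4 * B - A) * ((4 * B - A) * n) ^ 2 := by ring
  have hlin : 4 * B * m ≤ (4 * B - A) * n :=
    (pow_le_pow_iff_left₀ (by positivity) (by positivity) two_ne_zero).1 hsq
  rw [one_sub_div (by positivity), div_mul_eq_mul_div, le_div_iff₀ (by positivity)]
  linarith

open scoped Classical in
theorem stmt_4_general {X : Type*} [PseudoMetricSpace X] {H : Type*} [NormedAddCommGroup H]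
    [InnerProductSpace ℝ H] (P : Finset X) (q : X) (f : X → H)
    (D w lam β c p : ℝ) (hD : 0 < D) (hlam : 0 < lam) (hp0 : 0 ≤ p)
    (hLip : ∀ x y : X, ‖f x - f y‖ ≤ D * dist x y)
    (hAvg : ∑ x ∈ P, ∑ y ∈ P, dist x y ^ 2 ≤ ∑ x ∈ P, ∑ y ∈ P, ‖f x - f y‖ ^ 2)
    (hball : ∀ x ∈ P, ((P.filter fun y => dist x y ≤ lam * D).card : ℝ) ≤ p * P.card)
    (hdiam : ∀ x ∈ P, ∀ y ∈ P, dist x y ≤ β * c)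
    (hwlam : 16 * w ^ 2 ≤ (1 - p) * lam ^ 2)
    (hβc : lam ≤ β * c) :
    ((P.filter fun x => ‖f x - f q‖ ≤ w * D).card : ℝ) ≤
      (1 - (1 - p) * lam ^ 2 / (4 * β ^ 2 * c ^ 2)) * P.card := by
  set S := P.filter fun x => ‖f x - f q‖ ≤ w * D
  have hnear : ∀ x ∈ S, ∀ y ∈ S, ‖f x - f y‖ ^ 2 ≤ (2 * w * D) ^ 2 := fun x hx y hy => by
    have hxy := norm_sub_le_norm_sub_add_norm_sub (f x) (f q) (f y)
    rw [norm_sub_rev (f q)] at hxy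
    have hxq := (mem_filter.1 hx).2
    have hyq := (mem_filter.1 hy).2
    gcongr
    linarith
  have hfar : ∀ x ∈ P, ∀ y ∈ P, ‖f x - f y‖ ^ 2 ≤ (D * (β * c)) ^ 2 := fun x hx y hy => by
    gcongr
    exact (hLip x y).trans (by gcongr; exact hdiam x hx y hy)
  have hsums := (one_sub_mul_card_sq_mul_sq_le_sum_sum_dist_sq P (by positivity) hball).trans
    (hAvg.trans (sum_sum_le_of_subset _ (filter_subset _ P) hnear hfar))
  have hcards : (4 * (β * c) ^ 2 - (1 - p) * lam ^ 2) * #S ^ 2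
      ≤ 4 * ((β * c) ^ 2 - (1 - p) * lam ^ 2) * #P ^ 2 := by
    have hD2 : D ^ 2 * (((1 - p) * lam ^ 2 - (β * c) ^ 2) * #P ^ 2
        + ((β * c) ^ 2 - 4 * w ^ 2) * #S ^ 2) ≤ D ^ 2 * 0 := by
      linear_combination hsums
    have hcancel := le_of_mul_le_mul_left hD2 (by positivity)
    nlinarith [mul_le_mul_of_nonneg_right hwlam (sq_nonneg (#S : ℝ))]
  have hAB : (1 - p) * lam ^ 2 ≤ (β * c) ^ 2 := by
    nlinarith [pow_le_pow_left₀ hlam.le hβc 2, sq_nonneg lam]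
  convert le_one_sub_div_mul_of_mul_sq_le ((by positivity : 0 ≤ 16 * w ^ 2).trans hwlam) hAB
    (pow_pos (hlam.trans_le hβc) 2) (Nat.cast_nonneg _) (Nat.cast_nonneg _) hcards using 4
  ring

open scoped Classical in
/-- Main lemma: if `f` is an average embedding of `P` with distortion `D` (it is
`D`-Lipschitz and does not decrease the sum of squared distances over `P`), every ball of
radius `λ·D` contains at most a `p`-fraction of `P`, `P` has diameter at most `β·c`,
`(1 − p)·λ² ≥ 16·w²` and `β·c ≥ λ`, then the number of points of `P` mapped within distance
`w·D` of `f(q)` is at most `(1 − (1 − p)·λ²/(4·β²·c²))·|P|`. -/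
theorem stmt_4 {X : Type*} [PseudoMetricSpace X] {H : Type*} [NormedAddCommGroup H]
    [InnerProductSpace ℝ H] (P : Finset X) (hP : P.Nonempty) (q : X) (f : X → H)
    (D w lam β c p : ℝ) (hD : 0 < D) (hw : 0 < w) (hlam : 0 < lam) (hβ : 0 < β)
    (hc : 0 < c) (hp0 : 0 ≤ p) (hp1 : p ≤ 1)
    (hLip : ∀ x y : X, ‖f x - f y‖ ≤ D * dist x y)
    (hAvg : ∑ x ∈ P, ∑ y ∈ P, dist x y ^ 2 ≤ ∑ x ∈ P, ∑ y ∈ P, ‖f x - f y‖ ^ 2)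
    (hball : ∀ x ∈ P, ((P.filter fun y => dist x y ≤ lam * D).card : ℝ) ≤ p * P.card)
    (hdiam : ∀ x ∈ P, ∀ y ∈ P, dist x y ≤ β * c)
    (hwlam : 16 * w ^ 2 ≤ (1 - p) * lam ^ 2)
    (hβc : lam ≤ β * c) :
    ((P.filter fun x => ‖f x - f q‖ ≤ w * D).card : ℝ) ≤
      (1 - (1 - p) * lam ^ 2 / (4 * β ^ 2 * c ^ 2)) * P.card :=
  stmt_4_general P q f D w lam β c p hD hlam hp0 hLip hAvg hball hdiam hwlam hβc
end

section
/- Let p ≥ 2 be a real number and n a positive integer. For x ∈ ℝⁿ define h(x) ∈ ℝⁿ coordinatewise by h(x)_i = sign(x_i)·|x_i|^{p/2}. Then for all x, y ∈ ℝⁿ with ‖x‖_p = ‖y‖_p = 1, one has ‖h(x) − h(y)‖₂ ≤ (p/2)·‖x − y‖_p. -/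
open Finset

/-- The ℓ_p norm on ℝⁿ: `(∑ i, |x i| ^ p) ^ (1/p)`. -/
noncomputable def lpNorm (p : ℝ) {n : ℕ} (x : Fin n → ℝ) : ℝ :=
  (∑ i, |x i| ^ p) ^ (1 / p)

/-- The Euclidean (ℓ₂) norm on ℝⁿ. -/
noncomputable def l2Norm {n : ℕ} (x : Fin n → ℝ) : ℝ :=
  Real.sqrt (∑ i, (x i) ^ 2)

/-- The Mazur map from ℓ_p to ℓ₂: `h(x)_i = sign(x_i)·|x_i|^(p/2)`. -/
noncomputable def mazur (p : ℝ) {n : ℕ} (x : Fin n → ℝ) : Fin n → ℝ :=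
  fun i => Real.sign (x i) * |x i| ^ (p / 2)

/-!
Mean value inequality along the segment `s ↦ y + s • (x - y)`, which stays in the unit ball of
`ℓ_p` by convexity. At a point `z` the derivative of the Mazur map sends `v` to
`(p/2) • (|z i| ^ (p/2 - 1) * v i)ᵢ`. Writing `|z i| ^ (p-2) * v i ^ 2` as
`(|z i| ^ p) ^ θ * (|v i| ^ p) ^ (1 - θ)` with `θ = 1 - 2/p`, Hölder's inequality bounds the
`ℓ₂` norm of this vector by `(p/2) ‖z‖_p ^ (p/2 - 1) ‖v‖_p ≤ (p/2) ‖v‖_p`.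
-/

open Real

theorem Real.sign_mul_abs (t : ℝ) : Real.sign t * |t| = t := by
  rcases lt_trichotomy t 0 with ht | rfl | ht
  · rw [Real.sign_of_neg ht, abs_of_neg ht]; ring
  · simp
  · rw [Real.sign_of_pos ht, abs_of_pos ht, one_mul]

theorem Real.sign_mul_abs_rpow {q : ℝ} (hq : 1 ≤ q) (t : ℝ) :
    Real.sign t * |t| ^ q = t * |t| ^ (q - 1) := by
  have h : |t| ^ q = |t| * |t| ^ (q - 1) := by
    rw [← Real.rpow_one_add' (abs_nonneg t) (by linarith), add_sub_cancel]
  rw [h, ← mul_assoc, Real.sign_mul_abs]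

theorem hasDerivAt_sign_mul_abs_rpow {q : ℝ} (hq : 1 ≤ q) (t : ℝ) :
    HasDerivAt (fun t => Real.sign t * |t| ^ q) (q * |t| ^ (q - 1)) t := by
  have habs : Continuous fun t : ℝ => |t| ^ (q - 1) :=
    continuous_abs.rpow_const fun _ => Or.inr (by linarith)
  -- The sign is locally constant away from `0`; at `0` the formula extends by continuity.
  refine hasDerivAt_of_hasDerivAt_of_ne' (g := fun t => q * |t| ^ (q - 1)) (x := 0)
    (fun t ht => ?_) ?_ (continuous_const.mul habs).continuousAt t
  · rcases ht.lt_or_gt with ht | ht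
    · have hloc : (fun u : ℝ => -(-u) ^ q) =ᶠ[nhds t] fun u => Real.sign u * |u| ^ q := by
        filter_upwards [Iio_mem_nhds ht] with u hu
        rw [Real.sign_of_neg hu, abs_of_neg hu]; ring
      have h := ((Real.hasDerivAt_rpow_const (p := q) (Or.inl (neg_ne_zero.2 ht.ne))).comp t
        (hasDerivAt_neg t)).neg
      convert h.congr_of_eventuallyEq hloc.symm using 1
      rw [abs_of_neg ht]; ring
    · have hloc : (fun u : ℝ => u ^ q) =ᶠ[nhds t] fun u => Real.sign u * |u| ^ q := by
        filter_upwards [Ioi_mem_nhds ht] with u hu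
        rw [Real.sign_of_pos hu, abs_of_pos hu, one_mul]
      have h := Real.hasDerivAt_rpow_const (p := q) (Or.inl ht.ne')
      convert h.congr_of_eventuallyEq hloc.symm using 1
      rw [abs_of_pos ht]
  · rw [funext (Real.sign_mul_abs_rpow hq)]
    exact (continuous_id.mul habs).continuousAt

theorem Real.sum_rpow_mul_rpow_one_sub_le {ι : Type*} (s : Finset ι) {f g : ι → ℝ}
    (hf : ∀ i ∈ s, 0 ≤ f i) (hg : ∀ i ∈ s, 0 ≤ g i) {θ : ℝ} (h0 : 0 ≤ θ) (h1 : θ ≤ 1) :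
    ∑ i ∈ s, f i ^ θ * g i ^ (1 - θ) ≤ (∑ i ∈ s, f i) ^ θ * (∑ i ∈ s, g i) ^ (1 - θ) := by
  rcases h0.eq_or_lt with rfl | h0
  · simp
  rcases h1.eq_or_lt with rfl | h1
  · simp
  have hθ : θ⁻¹.HolderConjugate (1 - θ)⁻¹ :=
    Real.holderConjugate_iff.2 ⟨(one_lt_inv₀ h0).2 h1, by simp⟩
  have hf' : ∀ i ∈ s, (f i ^ θ) ^ θ⁻¹ = f i := fun i hi => rpow_rpow_inv (hf i hi) h0.ne'
  have hg' : ∀ i ∈ s, (g i ^ (1 - θ)) ^ (1 - θ)⁻¹ = g i :=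
    fun i hi => rpow_rpow_inv (hg i hi) (sub_pos.2 h1).ne'
  simpa only [one_div, inv_inv, sum_congr rfl hf', sum_congr rfl hg'] using
    inner_le_Lp_mul_Lq_of_nonneg s hθ (fun i hi => rpow_nonneg (hf i hi) θ)
      (fun i hi => rpow_nonneg (hg i hi) (1 - θ))

theorem lpNorm_nonneg (p : ℝ) {n : ℕ} (x : Fin n → ℝ) : 0 ≤ lpNorm p x :=
  rpow_nonneg (sum_nonneg fun _ _ => rpow_nonneg (abs_nonneg _) _) _

theorem lpNorm_rpow {p : ℝ} (hp : p ≠ 0) {n : ℕ} (x : Fin n → ℝ) :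
    lpNorm p x ^ p = ∑ i, |x i| ^ p := by
  rw [lpNorm, one_div, rpow_inv_rpow (sum_nonneg fun _ _ => rpow_nonneg (abs_nonneg _) _) hp]

theorem lpNorm_add_le {p : ℝ} (hp : 1 ≤ p) {n : ℕ} (x y : Fin n → ℝ) :
    lpNorm p (x + y) ≤ lpNorm p x + lpNorm p y :=
  Real.Lp_add_le univ x y hp

theorem lpNorm_smul {p : ℝ} (hp : 0 < p) {n : ℕ} (c : ℝ) (x : Fin n → ℝ) :
    lpNorm p (c • x) = |c| * lpNorm p x := by
  simp only [lpNorm, Pi.smul_apply, smul_eq_mul, abs_mul,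
    mul_rpow (abs_nonneg c) (abs_nonneg _), ← mul_sum]
  rw [mul_rpow (rpow_nonneg (abs_nonneg c) _) (sum_nonneg fun _ _ => rpow_nonneg (abs_nonneg _) _),
    ← rpow_mul (abs_nonneg c), mul_one_div_cancel hp.ne', rpow_one]

theorem lpNorm_add_smul_sub_le_one {p : ℝ} (hp : 1 ≤ p) {n : ℕ} {x y : Fin n → ℝ}
    (hx : lpNorm p x ≤ 1) (hy : lpNorm p y ≤ 1) {s : ℝ} (hs : s ∈ Set.Icc (0 : ℝ) 1) :
    lpNorm p (y + s • (x - y)) ≤ 1 := by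
  have hp0 : 0 < p := by linarith
  rw [show y + s • (x - y) = (1 - s) • y + s • x by module]
  calc lpNorm p ((1 - s) • y + s • x) ≤ (1 - s) * lpNorm p y + s * lpNorm p x := by
        grw [lpNorm_add_le hp, lpNorm_smul hp0, lpNorm_smul hp0, abs_of_nonneg (sub_nonneg.2 hs.2),
          abs_of_nonneg hs.1]
    _ ≤ (1 - s) * 1 + s * 1 := by
        gcongr
        · exact sub_nonneg.2 hs.2
        · exact hs.1
    _ = 1 := by ring

theorem l2Norm_eq_norm {n : ℕ} (v : Fin n → ℝ) :
    l2Norm v = ‖(WithLp.toLp 2 v : EuclideanSpace ℝ (Fin n))‖ := by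
  simp [l2Norm, EuclideanSpace.norm_eq, Real.norm_eq_abs]

theorem l2Norm_abs_rpow_mul_le {p : ℝ} (hp : 2 ≤ p) {n : ℕ} (z v : Fin n → ℝ) :
    l2Norm (fun i => |z i| ^ (p / 2 - 1) * v i) ≤ lpNorm p z ^ (p / 2 - 1) * lpNorm p v := by
  have hp0 : 0 < p := by linarith
  set θ := 1 - 2 / p with hθ
  have hθ0 : 0 ≤ θ := by
    rw [hθ, sub_nonneg, div_le_one hp0]; exact hp
  have hθ1 : θ ≤ 1 := by
    have : 0 ≤ 2 / p := by positivity
    linarith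
  have hpow : ∀ a : ℝ, 0 ≤ a → (a ^ (p / 2 - 1)) ^ 2 = (a ^ p) ^ θ := fun a ha => by
    rw [← rpow_natCast, ← rpow_mul ha, ← rpow_mul ha, hθ]
    congr 1
    field_simp
    ring
  have hsq : ∀ a : ℝ, 0 ≤ a → a ^ 2 = (a ^ p) ^ (1 - θ) := fun a ha => by
    rw [← rpow_mul ha, hθ, sub_sub_cancel, mul_div_cancel₀ _ hp0.ne', rpow_two]
  have key : ∑ i, (|z i| ^ (p / 2 - 1) * v i) ^ 2 ≤ (lpNorm p z ^ (p / 2 - 1) * lpNorm p v) ^ 2 :=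
    calc ∑ i, (|z i| ^ (p / 2 - 1) * v i) ^ 2 = ∑ i, (|z i| ^ p) ^ θ * (|v i| ^ p) ^ (1 - θ) := by
          refine sum_congr rfl fun i _ => ?_
          rw [mul_pow, hpow _ (abs_nonneg _), ← sq_abs (v i), hsq _ (abs_nonneg _)]
      _ ≤ (∑ i, |z i| ^ p) ^ θ * (∑ i, |v i| ^ p) ^ (1 - θ) :=
          Real.sum_rpow_mul_rpow_one_sub_le univ (fun i _ => rpow_nonneg (abs_nonneg _) p)
            (fun i _ => rpow_nonneg (abs_nonneg _) p) hθ0 hθ1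
      _ = (lpNorm p z ^ (p / 2 - 1) * lpNorm p v) ^ 2 := by
          rw [mul_pow, hpow _ (lpNorm_nonneg _ _), hsq _ (lpNorm_nonneg _ _), lpNorm_rpow hp0.ne',
            lpNorm_rpow hp0.ne']
  have hrhs : 0 ≤ lpNorm p z ^ (p / 2 - 1) * lpNorm p v :=
    mul_nonneg (rpow_nonneg (lpNorm_nonneg _ _) _) (lpNorm_nonneg _ _)
  exact (Real.sqrt_le_sqrt key).trans_eq (Real.sqrt_sq hrhs)

theorem hasDerivAt_toLp_mazur_add_smul_sub {p : ℝ} (hp : 2 ≤ p) {n : ℕ} (x y : Fin n → ℝ) (s : ℝ) :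
    HasDerivAt (fun s => (WithLp.toLp 2 (mazur p (y + s • (x - y))) : EuclideanSpace ℝ (Fin n)))
      ((p / 2) • WithLp.toLp 2 (fun i => |(y + s • (x - y)) i| ^ (p / 2 - 1) * (x - y) i)) s := by
  have hq : 1 ≤ p / 2 := by linarith
  have hcoord : HasDerivAt (fun s => mazur p (y + s • (x - y)))
      (fun i => p / 2 * |(y + s • (x - y)) i| ^ (p / 2 - 1) * (x - y) i) s := by
    refine hasDerivAt_pi.2 fun i => ?_
    have hline : HasDerivAt (fun s : ℝ => (y + s • (x - y)) i) ((x - y) i) s := by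
      simpa using ((hasDerivAt_id s).mul_const ((x - y) i)).const_add (y i)
    exact (hasDerivAt_sign_mul_abs_rpow hq _).comp s hline
  refine ((EuclideanSpace.equiv (Fin n) ℝ).symm.hasFDerivAt.comp_hasDerivAt s hcoord).congr_deriv ?_
  ext i
  simp [mul_assoc]

theorem l2Norm_mazur_sub_le_of_lpNorm_le_one {p : ℝ} (hp : 2 ≤ p) {n : ℕ} {x y : Fin n → ℝ}
    (hx : lpNorm p x ≤ 1) (hy : lpNorm p y ≤ 1) :
    l2Norm (mazur p x - mazur p y) ≤ p / 2 * lpNorm p (x - y) := by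
  have hbound : ∀ s ∈ Set.Ico (0 : ℝ) 1,
      ‖(p / 2) • (WithLp.toLp 2 (fun i => |(y + s • (x - y)) i| ^ (p / 2 - 1) * (x - y) i) :
        EuclideanSpace ℝ (Fin n))‖ ≤ p / 2 * lpNorm p (x - y) := by
    intro s hs
    rw [norm_smul, Real.norm_of_nonneg (by linarith), ← l2Norm_eq_norm]
    gcongr
    calc _ ≤ lpNorm p (y + s • (x - y)) ^ (p / 2 - 1) * lpNorm p (x - y) :=
          l2Norm_abs_rpow_mul_le hp _ _
      _ ≤ 1 ^ (p / 2 - 1) * lpNorm p (x - y) := by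
          gcongr
          · exact lpNorm_nonneg _ _
          · exact lpNorm_nonneg _ _
          · linarith
          · exact lpNorm_add_smul_sub_le_one (by linarith) hx hy (Set.Ico_subset_Icc_self hs)
      _ = lpNorm p (x - y) := by rw [one_rpow, one_mul]
  have h := norm_image_sub_le_of_norm_deriv_le_segment_01'
    (fun s _ => (hasDerivAt_toLp_mazur_add_smul_sub hp x y s).hasDerivWithinAt) hbound
  rw [l2Norm_eq_norm]
  simpa using h

theorem stmt_8_general (p : ℝ) (hp : 2 ≤ p) (n : ℕ) (x y : Fin n → ℝ)
    (hx : lpNorm p x = 1) (hy : lpNorm p y = 1) :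
    l2Norm (mazur p x - mazur p y) ≤ (p / 2) * lpNorm p (x - y) :=
  l2Norm_mazur_sub_le_of_lpNorm_le_one hp hx.le hy.le

/-- The Mazur map is `(p/2)`-Lipschitz on the unit sphere of `ℓ_pⁿ`. -/
theorem stmt_8 (p : ℝ) (hp : 2 ≤ p) (n : ℕ) (hn : 0 < n) (x y : Fin n → ℝ)
    (hx : lpNorm p x = 1) (hy : lpNorm p y = 1) :
    l2Norm (mazur p x - mazur p y) ≤ (p / 2) * lpNorm p (x - y) :=
  stmt_8_general p hp n x y hx hy
end

section
/- Let r ≥ 1 be a real number. For all real numbers a, b, one has |sign(a)·|a|^r − sign(b)·|b|^r| ≤ r · max(|a|, |b|)^{r−1} · |a − b|. -/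
/-! The map `x ↦ sign x * |x| ^ r` is odd and equals `x ^ r` on `[0, ∞)`. For arguments of the same
sign the bound is the tangent-line inequality for the convex function `x ↦ x ^ r` at the larger
point. For arguments of opposite signs it follows from `x ^ r = x ^ (r - 1) * x ≤ M ^ (r - 1) * x`
for `0 ≤ x ≤ M`, together with `1 ≤ r`. -/

open Real

namespace Real

theorem sign_mul_abs_rpow_of_nonneg {r x : ℝ} (hr : r ≠ 0) (hx : 0 ≤ x) :
    sign x * |x| ^ r = x ^ r := by
  rcases hx.eq_or_lt with rfl | hx
  · simp [zero_rpow hr]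
  · rw [sign_of_pos hx, abs_of_pos hx, one_mul]

theorem sign_mul_abs_rpow_of_nonpos {r x : ℝ} (hr : r ≠ 0) (hx : x ≤ 0) :
    sign x * |x| ^ r = -(-x) ^ r := by
  rw [← sign_mul_abs_rpow_of_nonneg hr (neg_nonneg.2 hx), sign_neg, abs_neg, neg_mul, neg_neg]

theorem rpow_sub_rpow_le_mul_sub {r x y : ℝ} (hr : 1 ≤ r) (hy : 0 ≤ y) (hyx : y ≤ x) :
    x ^ r - y ^ r ≤ r * x ^ (r - 1) * (x - y) := by
  rcases hyx.eq_or_lt with rfl | hlt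
  · simp
  have hslope := (convexOn_rpow hr).slope_le_of_hasDerivAt hy (hy.trans hyx) hlt
    (hasDerivAt_rpow_const (Or.inr hr))
  rwa [slope_def_field, div_le_iff₀ (sub_pos.2 hlt)] at hslope

theorem abs_rpow_sub_rpow_le {r x y : ℝ} (hr : 1 ≤ r) (hx : 0 ≤ x) (hy : 0 ≤ y) :
    |x ^ r - y ^ r| ≤ r * max x y ^ (r - 1) * |x - y| := by
  wlog hyx : y ≤ x generalizing x y
  · rw [abs_sub_comm, max_comm, abs_sub_comm x]
    exact this hy hx (le_of_not_ge hyx)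
  rw [abs_of_nonneg (sub_nonneg.2 (rpow_le_rpow hy hyx (by linarith))),
    abs_of_nonneg (sub_nonneg.2 hyx), max_eq_left hyx]
  exact rpow_sub_rpow_le_mul_sub hr hy hyx

theorem rpow_le_rpow_sub_one_mul {r x M : ℝ} (hr : 1 ≤ r) (hx : 0 ≤ x) (hxM : x ≤ M) :
    x ^ r ≤ M ^ (r - 1) * x := by
  calc x ^ r = x ^ (r - 1) * x := by
        rw [← rpow_add_one' hx (by linarith), sub_add_cancel]
    _ ≤ M ^ (r - 1) * x := by gcongr

theorem rpow_add_rpow_le_mul_add {r x y : ℝ} (hr : 1 ≤ r) (hx : 0 ≤ x) (hy : 0 ≤ y) :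
    x ^ r + y ^ r ≤ r * max x y ^ (r - 1) * (x + y) := by
  have hM : 0 ≤ max x y ^ (r - 1) := rpow_nonneg (hx.trans (le_max_left x y)) _
  calc x ^ r + y ^ r ≤ max x y ^ (r - 1) * (x + y) := by
        rw [mul_add]
        exact add_le_add (rpow_le_rpow_sub_one_mul hr hx (le_max_left x y))
          (rpow_le_rpow_sub_one_mul hr hy (le_max_right x y))
    _ ≤ r * max x y ^ (r - 1) * (x + y) := by
        rw [mul_assoc]
        exact le_mul_of_one_le_left (mul_nonneg hM (add_nonneg hx hy)) hr

end Real

/-- Pointwise inequality for the Mazur map: for `r ≥ 1` and all reals `a, b`,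
`|sign(a)·|a|^r − sign(b)·|b|^r| ≤ r · max(|a|, |b|)^(r−1) · |a − b|`. -/
theorem stmt_9 (r : ℝ) (hr : 1 ≤ r) (a b : ℝ) :
    |Real.sign a * |a| ^ r - Real.sign b * |b| ^ r| ≤
      r * (max |a| |b|) ^ (r - 1) * |a - b| := by
  wlog hba : b ≤ a generalizing a b
  · rw [abs_sub_comm, max_comm, abs_sub_comm a]
    exact this b a (le_of_not_ge hba)
  have hr0 : r ≠ 0 := by linarith
  rcases le_total 0 b with hb | hb
  · have ha := hb.trans hba
    rw [sign_mul_abs_rpow_of_nonneg hr0 ha, sign_mul_abs_rpow_of_nonneg hr0 hb,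
      abs_of_nonneg ha, abs_of_nonneg hb]
    exact abs_rpow_sub_rpow_le hr ha hb
  rcases le_total a 0 with ha | ha
  · rw [sign_mul_abs_rpow_of_nonpos hr0 ha, sign_mul_abs_rpow_of_nonpos hr0 hb,
      abs_of_nonpos ha, abs_of_nonpos hb, neg_sub_neg, abs_sub_comm ((-b) ^ r), abs_sub_comm a,
      ← neg_sub_neg a b]
    exact abs_rpow_sub_rpow_le hr (neg_nonneg.2 ha) (neg_nonneg.2 hb)
  · rw [sign_mul_abs_rpow_of_nonneg hr0 ha, sign_mul_abs_rpow_of_nonpos hr0 hb,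
      abs_of_nonneg ha, abs_of_nonpos hb, sub_neg_eq_add,
      abs_of_nonneg (add_nonneg (rpow_nonneg ha r) (rpow_nonneg (neg_nonneg.2 hb) r)),
      abs_of_nonneg (sub_nonneg.2 hba), sub_eq_add_neg]
    exact rpow_add_rpow_le_mul_add hr ha (neg_nonneg.2 hb)
end
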